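/- arXiv:2108.00140 — 5 statements merged into one kernel-verified Lean document; each statement's English description precedes it below -/
import Mathlib

section
/- Suppose the class 𝓛 of a complete duality pair (L,A) is closed under kernels of epimorphisms. Then the class of Gorenstein (L,A)-projective modules equals the intersection of the class of Ding projective modules with the class of modules X satisfying Extⁱ_R(X, L) = 0 for all L ∈ 𝓛 and all i ≥ 1. -/
open CategoryTheory CategoryTheory.Limits DirectSum

namespace DualityPaper

variable {R : Type} [Ring R]

/-- The right `R`-module structure on the group of additive maps out of a left `R`-module,
given by `(f • r) m = f (r • m)`. -/
instance charModuleRight (M A : Type) [AddCommGroup M] [AddCommGroup A] [Module R M] :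
    Module Rᵐᵒᵖ (M →+ A) where
  smul r f := f.comp (DistribMulAction.toAddMonoidHom M r.unop)
  one_smul f := AddMonoidHom.ext fun m => by
    show f ((1 : Rᵐᵒᵖ).unop • m) = f m
    simp
  mul_smul r s f := AddMonoidHom.ext fun m => by
    show f ((r * s).unop • m) = f (s.unop • r.unop • m)
    rw [MulOpposite.unop_mul, mul_smul]
  smul_zero r := rfl
  smul_add r f g := rfl
  add_smul r s f := AddMonoidHom.ext fun m => by
    show f ((r + s).unop • m) = f (r.unop • m) + f (s.unop • m)
    rw [MulOpposite.unop_add, add_smul, map_add]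
  zero_smul f := AddMonoidHom.ext fun m => by
    show f ((0 : Rᵐᵒᵖ).unop • m) = 0
    simp

/-- The left `R`-module structure on the group of additive maps out of a right `R`-module. -/
instance charModuleLeft (N A : Type) [AddCommGroup N] [AddCommGroup A] [Module Rᵐᵒᵖ N] :
    Module R (N →+ A) where
  smul r f := f.comp (DistribMulAction.toAddMonoidHom N (MulOpposite.op r))
  one_smul f := AddMonoidHom.ext fun m => by
    show f ((MulOpposite.op (1 : R)) • m) = f m
    simp
  mul_smul r s f := AddMonoidHom.ext fun m => by
    show f (MulOpposite.op (r * s) • m) = f (MulOpposite.op s • MulOpposite.op r • m)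
    rw [MulOpposite.op_mul, mul_smul]
  smul_zero r := rfl
  smul_add r f g := rfl
  add_smul r s f := AddMonoidHom.ext fun m => by
    show f (MulOpposite.op (r + s) • m) = f (MulOpposite.op r • m) + f (MulOpposite.op s • m)
    rw [MulOpposite.op_add, add_smul, map_add]
  zero_smul f := AddMonoidHom.ext fun m => by
    show f (MulOpposite.op (0 : R) • m) = 0
    simp

/-- The character module `M⁺ = Hom_ℤ(M, ℚ/ℤ)` of a left module, as a right module. -/
def charL (M : ModuleCat.{0} R) : ModuleCat.{0} Rᵐᵒᵖ :=
  ModuleCat.of Rᵐᵒᵖ (M →+ AddCircle (1 : ℚ))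

/-- The character module `N⁺ = Hom_ℤ(N, ℚ/ℤ)` of a right module, as a left module. -/
def charR (N : ModuleCat.{0} Rᵐᵒᵖ) : ModuleCat.{0} R :=
  ModuleCat.of R (N →+ AddCircle (1 : ℚ))

/-- A left module over a (possibly noncommutative) ring is flat iff its character module is an
injective right module (Lambek); we take this as the definition of flatness. -/
def IsFlatMod (M : ModuleCat.{0} R) : Prop := CategoryTheory.Injective (charL M)

/-- `f`, `g` form a short exact sequence `0 → A → B → C → 0`. -/
def SES {A B C : ModuleCat.{0} R} (f : A ⟶ B) (g : B ⟶ C) : Prop :=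
  ∃ w : f ≫ g = 0, (ShortComplex.mk f g w).ShortExact

/-- Vanishing of `Ext^n_R(M, N)`. -/
def ExtVanish (n : ℕ) (M N : ModuleCat.{0} R) : Prop :=
  Subsingleton (((_root_.Ext ℤ (ModuleCat.{0} R) n).obj (Opposite.op M)).obj N)

/-- A complete duality pair `(𝓛, 𝓐)` over `R`. -/
structure CompleteDualityPair (𝓛 : Set (ModuleCat.{0} R)) (𝓐 : Set (ModuleCat.{0} Rᵐᵒᵖ)) :
    Prop where
  isoClosed_L : ∀ {M N : ModuleCat.{0} R}, (M ≅ N) → M ∈ 𝓛 → N ∈ 𝓛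
  isoClosed_A : ∀ {M N : ModuleCat.{0} Rᵐᵒᵖ}, (M ≅ N) → M ∈ 𝓐 → N ∈ 𝓐
  char_mem_iff : ∀ M : ModuleCat.{0} R, M ∈ 𝓛 ↔ charL M ∈ 𝓐
  char_mem_iff' : ∀ N : ModuleCat.{0} Rᵐᵒᵖ, N ∈ 𝓐 ↔ charR N ∈ 𝓛
  summands_A : ∀ A ∈ 𝓐, ∀ (B : ModuleCat.{0} Rᵐᵒᵖ) (i : B ⟶ A) (p : A ⟶ B),
    i ≫ p = 𝟙 B → B ∈ 𝓐
  sums_A : ∀ A B : ModuleCat.{0} Rᵐᵒᵖ, A ∈ 𝓐 → B ∈ 𝓐 → ModuleCat.of Rᵐᵒᵖ (A × B) ∈ 𝓐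
  summands_L : ∀ L ∈ 𝓛, ∀ (K : ModuleCat.{0} R) (i : K ⟶ L) (p : L ⟶ K),
    i ≫ p = 𝟙 K → K ∈ 𝓛
  sums_L : ∀ L K : ModuleCat.{0} R, L ∈ 𝓛 → K ∈ 𝓛 → ModuleCat.of R (L × K) ∈ 𝓛
  self_mem : ModuleCat.of R R ∈ 𝓛
  coprod_L : ∀ (ι : Type) (f : ι → ModuleCat.{0} R), (∀ i, f i ∈ 𝓛) →
    ModuleCat.of R (⨁ i, f i) ∈ 𝓛
  ext_L : ∀ {A B C : ModuleCat.{0} R} (f : A ⟶ B) (g : B ⟶ C),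
    SES f g → A ∈ 𝓛 → C ∈ 𝓛 → B ∈ 𝓛

/-- A doubly infinite exact sequence of projectives which stays exact after applying
`Hom_R(-, T)` for every `T` in the class `𝓣`. -/
structure IsTotallyAcyclicWrt (𝓣 : Set (ModuleCat.{0} R))
    (C : ChainComplex (ModuleCat.{0} R) ℤ) : Prop where
  projective : ∀ n, Projective (C.X n)
  exact : ∀ n, (C.sc n).Exact
  homExact : ∀ T ∈ 𝓣, ∀ (n : ℤ) (g : C.X n ⟶ T), C.d (n + 1) n ≫ g = 0 →
    ∃ h : C.X (n - 1) ⟶ T, C.d n (n - 1) ≫ h = g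

/-- `M` is Gorenstein projective relative to the class `𝓣`:  it is a kernel in a
`Hom_R(-, 𝓣)`-exact exact sequence of projective modules. -/
def IsGProj (𝓣 : Set (ModuleCat.{0} R)) (M : ModuleCat.{0} R) : Prop :=
  ∃ C : ChainComplex (ModuleCat.{0} R) ℤ, IsTotallyAcyclicWrt 𝓣 C ∧
    ∃ n : ℤ, Nonempty (M ≅ kernel (C.d n (n - 1)))

/-- `M` is strongly Gorenstein `(𝓛,𝓐)`-projective. -/
def IsSGProj (𝓣 : Set (ModuleCat.{0} R)) (M : ModuleCat.{0} R) : Prop :=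
  ∃ (P : ModuleCat.{0} R) (f : P ⟶ P), Projective P ∧
    (∃ w : f ≫ f = 0, (ShortComplex.mk f f w).Exact) ∧
    (∀ T ∈ 𝓣, ∀ g : P ⟶ T, f ≫ g = 0 → ∃ h : P ⟶ T, f ≫ h = g) ∧
    Nonempty (M ≅ kernel f)

/-- Resolution dimension of `M` with respect to a class `𝓒` is at most `n`. -/
def ResDimLE (𝓒 : Set (ModuleCat.{0} R)) : ℕ → ModuleCat.{0} R → Prop
  | 0, M => M ∈ 𝓒
  | n + 1, M => ∃ (K C : ModuleCat.{0} R) (f : K ⟶ C) (g : C ⟶ M),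
      C ∈ 𝓒 ∧ SES f g ∧ ResDimLE 𝓒 n K

/-- `K` is an `n`-th kernel of an exact sequence `0 → K → C_{n-1} → ⋯ → C₀ → M → 0`
with all `Cᵢ` in `𝓒`. -/
def IsNthSyzygy (𝓒 : Set (ModuleCat.{0} R)) : ℕ → ModuleCat.{0} R → ModuleCat.{0} R → Prop
  | 0, M, K => Nonempty (K ≅ M)
  | n + 1, M, K => ∃ (S C : ModuleCat.{0} R) (f : S ⟶ C) (g : C ⟶ M),
      C ∈ 𝓒 ∧ SES f g ∧ IsNthSyzygy 𝓒 n S K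

/-- A left Frobenius pair `(𝓧, ω)`. -/
structure LeftFrobeniusPair (𝓧 ω : Set (ModuleCat.{0} R)) : Prop where
  summands_X : ∀ X ∈ 𝓧, ∀ (Y : ModuleCat.{0} R) (i : Y ⟶ X) (p : X ⟶ Y),
    i ≫ p = 𝟙 Y → Y ∈ 𝓧
  extensions_X : ∀ {A B C : ModuleCat.{0} R} (f : A ⟶ B) (g : B ⟶ C),
    SES f g → A ∈ 𝓧 → C ∈ 𝓧 → B ∈ 𝓧
  kerEpi_X : ∀ {A B C : ModuleCat.{0} R} (f : A ⟶ B) (g : B ⟶ C),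
    SES f g → B ∈ 𝓧 → C ∈ 𝓧 → A ∈ 𝓧
  subset : ω ⊆ 𝓧
  inj : ∀ X ∈ 𝓧, ∀ W ∈ ω, ∀ i : ℕ, 1 ≤ i → ExtVanish i X W
  cogen : ∀ X ∈ 𝓧, ∃ (W X' : ModuleCat.{0} R) (f : X ⟶ W) (g : W ⟶ X'),
    W ∈ ω ∧ X' ∈ 𝓧 ∧ SES f g
  summands_ω : ∀ W ∈ ω, ∀ (V : ModuleCat.{0} R) (i : V ⟶ W) (p : W ⟶ V),
    i ≫ p = 𝟙 V → V ∈ ω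

/-!
Flat modules lie in `𝓛`: a flat `F` is a quotient of a free module `P`, and the injective
character module `F⁺` splits off `P⁺ ∈ 𝓐`. Hence a `Hom(-, 𝓛)`-exact complete resolution is
`Hom(-, flat)`-exact, and since the truncation of a complete resolution at `n` is a projective
resolution of its `n`-th kernel, `Hom(-, L)`-exactness in degrees `≥ n + 2` is exactly the
vanishing of `Extⁱ(kernel, L)` for `i ≥ 1`.

Conversely, for a Ding complete resolution `K` with `Ext`-orthogonal kernel, `Hom(-, L)`-exactness
holds in high degrees and is pushed down one degree at a time: every `L ∈ 𝓛` is a quotient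
`0 → L' → P → L → 0` of a free `P` with `L' ∈ 𝓛` (closure under kernels of epimorphisms), and
because the terms of `K` are projective, exactness for `P` (flat) in degree `m` and for `L'` in
degree `m + 1` gives exactness for `L` in degree `m`.
-/

open MulOpposite

section CharacterModule

def charLMap {M N : ModuleCat.{0} R} (f : M ⟶ N) : charL N ⟶ charL M :=
  ModuleCat.ofHom
    { toFun := fun φ => (φ : N →+ AddCircle (1 : ℚ)).comp f.hom.toAddMonoidHom
      map_add' := fun _ _ => rfl
      map_smul' := fun r φ => AddMonoidHom.ext fun m =>
        show φ (r.unop • f m) = φ (f (r.unop • m)) from congrArg φ (map_smul f.hom _ _).symm }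

def charRMap {X Y : ModuleCat.{0} Rᵐᵒᵖ} (f : X ⟶ Y) : charR Y ⟶ charR X :=
  ModuleCat.ofHom
    { toFun := fun φ => (φ : Y →+ AddCircle (1 : ℚ)).comp f.hom.toAddMonoidHom
      map_add' := fun _ _ => rfl
      map_smul' := fun r φ => AddMonoidHom.ext fun x =>
        show φ (op r • f x) = φ (f (op r • x)) from congrArg φ (map_smul f.hom _ _).symm }

theorem mono_charLMap {M N : ModuleCat.{0} R} (f : M ⟶ N) [Epi f] : Mono (charLMap f) :=
  (ModuleCat.mono_iff_injective _).2 <| CharacterModule.dual_injective_of_surjective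
    f.hom.toAddMonoidHom.toIntLinearMap ((ModuleCat.epi_iff_surjective f).1 inferInstance)

theorem epi_charRMap {X Y : ModuleCat.{0} Rᵐᵒᵖ} (f : X ⟶ Y) [Mono f] : Epi (charRMap f) :=
  (ModuleCat.epi_iff_surjective _).2 <| CharacterModule.dual_surjective_of_injective
    f.hom.toAddMonoidHom.toIntLinearMap ((ModuleCat.mono_iff_injective f).1 inferInstance)

variable {M : ModuleCat.{0} R} {X : ModuleCat.{0} Rᵐᵒᵖ}

-- The two transposes realise the adjunction `Hom(X, M⁺) ≃ Hom(M, X⁺)`; the sources are written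
-- with `ModuleCat.of` so that their elements coerce to functions.
def charLTranspose (g : X ⟶ ModuleCat.of Rᵐᵒᵖ (M →+ AddCircle (1 : ℚ))) : M ⟶ charR X :=
  ModuleCat.ofHom
    { toFun := fun m => (AddMonoidHom.eval m).comp g.hom.toAddMonoidHom
      map_add' := fun m m' => AddMonoidHom.ext fun x => map_add (g x) m m'
      map_smul' := fun r m => AddMonoidHom.ext fun x =>
        show g x (r • m) = g (op r • x) m by rw [map_smul g.hom]; rfl }

def charRTranspose (h : M ⟶ ModuleCat.of R (X →+ AddCircle (1 : ℚ))) : X ⟶ charL M :=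
  ModuleCat.ofHom
    { toFun := fun x => (AddMonoidHom.eval x).comp h.hom.toAddMonoidHom
      map_add' := fun x x' => AddMonoidHom.ext fun m => map_add (h m) x x'
      map_smul' := fun r x => AddMonoidHom.ext fun m =>
        show h m (r • x) = h (r.unop • m) x by rw [map_smul h.hom]; rfl }

-- Transpose to `P ⟶ X⁺`, lift along the epimorphism `Y⁺ ⟶ X⁺`, and transpose back.
theorem isFlatMod_of_projective (P : ModuleCat.{0} R) [Projective P] : IsFlatMod P := by
  refine ⟨fun {X Y} g f _ => ?_⟩
  have := epi_charRMap f
  let h : P ⟶ charR Y := Projective.factorThru (charLTranspose g) (charRMap f)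
  have hh : h ≫ charRMap f = charLTranspose g := Projective.factorThru_comp _ _
  refine ⟨charRTranspose h, ?_⟩
  ext x
  refine AddMonoidHom.ext fun m => ?_
  exact congr((show X →+ AddCircle (1 : ℚ) from ConcreteCategory.hom $hh m) x)

end CharacterModule

namespace CompleteDualityPair

variable {𝓛 : Set (ModuleCat.{0} R)} {𝓐 : Set (ModuleCat.{0} Rᵐᵒᵖ)}

theorem finsupp_mem (hdp : CompleteDualityPair 𝓛 𝓐) (ι : Type) :
    ModuleCat.of R (ι →₀ R) ∈ 𝓛 := by
  classical
  exact hdp.isoClosed_L (finsuppLEquivDirectSum R R ι).symm.toModuleIso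
    (hdp.coprod_L ι _ fun _ => hdp.self_mem)

theorem mem_of_isFlatMod (hdp : CompleteDualityPair 𝓛 𝓐) {F : ModuleCat.{0} R}
    (hF : IsFlatMod F) : F ∈ 𝓛 := by
  let p : ModuleCat.of R (F →₀ R) ⟶ F := ModuleCat.ofHom (Finsupp.linearCombination R id)
  have : Epi p := (ModuleCat.epi_iff_surjective p).2 (Finsupp.linearCombination_id_surjective R F)
  have : Mono (charLMap p) := mono_charLMap p
  have : Injective (charL F) := hF
  -- `charL F` is injective, so it is a direct summand of `charL (F →₀ R) ∈ 𝓐`.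
  refine (hdp.char_mem_iff F).2 <| hdp.summands_A _ ((hdp.char_mem_iff _).1 (hdp.finsupp_mem F))
    _ (charLMap p) (Injective.factorThru (𝟙 _) (charLMap p)) (Injective.comp_factorThru _ _)

end CompleteDualityPair

section CompleteResolution

variable {𝒞 : Type*} [Category 𝒞] [Abelian 𝒞] (K : ChainComplex 𝒞 ℤ)

def HomExactAt (T : 𝒞) (n : ℤ) : Prop :=
  ∀ g : K.X n ⟶ T, K.d (n + 1) n ≫ g = 0 → ∃ h : K.X (n - 1) ⟶ T, K.d n (n - 1) ≫ h = g

variable {K}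

theorem homExactAt_iff {T : 𝒞} {i j k : ℤ} (hi : i = j + 1) (hk : k = j - 1) :
    HomExactAt K T j ↔
      ∀ g : K.X j ⟶ T, K.d i j ≫ g = 0 → ∃ h : K.X k ⟶ T, K.d j k ≫ h = g := by
  subst hi hk
  rfl

theorem HomExactAt.of_shortExact {S : ShortComplex 𝒞} (hS : S.ShortExact) {n : ℤ}
    [Projective (K.X n)] (h₂ : HomExactAt K S.X₂ n) (h₁ : HomExactAt K S.X₁ (n + 1)) :
    HomExactAt K S.X₃ n := by
  intro g hg
  have := hS.epi_g
  have := hS.mono_f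
  let g₂ := Projective.factorThru g S.g
  have hg₂ : g₂ ≫ S.g = g := Projective.factorThru_comp g S.g
  let u := hS.exact.lift (K.d (n + 1) n ≫ g₂) (by simp [hg₂, hg])
  have hu : u ≫ S.f = K.d (n + 1) n ≫ g₂ := hS.exact.lift_f _ _
  obtain ⟨v, hv⟩ := (homExactAt_iff (k := n) rfl (by ring)).1 h₁ u <| by
    simp [← cancel_mono S.f, hu]
  obtain ⟨w, hw⟩ := h₂ (g₂ - v ≫ S.f) (by simp [reassoc_of% hv, hu])
  exact ⟨w ≫ S.g, by simp [reassoc_of% hw, hg₂]⟩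

end CompleteResolution

section KernelResolution

variable {𝒞 : Type*} [Category 𝒞] [Abelian 𝒞] {K : ChainComplex 𝒞 ℤ}

theorem exact_sc'_of_exactAt {i j k : ℤ} (hE : K.ExactAt j) (hi : i = j + 1) (hk : k = j - 1) :
    (K.sc' i j k).Exact :=
  (K.exactAt_iff' i j k (by simp [hi]) (by simp [hk])).1 hE

variable (K)

def kernelResolutionComplex (n : ℤ) : ChainComplex 𝒞 ℕ :=
  ChainComplex.of (fun i : ℕ => K.X (n + 1 + (i : ℤ)))
    (fun i : ℕ => K.d (n + 1 + ((i + 1 : ℕ) : ℤ)) (n + 1 + (i : ℤ))) fun _ => K.d_comp_d _ _ _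

@[simp]
theorem kernelResolutionComplex_d (n : ℤ) (i : ℕ) :
    (kernelResolutionComplex K n).d (i + 1) i =
      K.d (n + 1 + ((i + 1 : ℕ) : ℤ)) (n + 1 + (i : ℤ)) :=
  ChainComplex.of_d (fun i : ℕ => K.X (n + 1 + (i : ℤ)))
    (fun i : ℕ => K.d (n + 1 + ((i + 1 : ℕ) : ℤ)) (n + 1 + (i : ℤ))) i

variable {K}

theorem kernelResolutionComplex_exactAt_succ (hE : ∀ j, K.ExactAt j) (n : ℤ) (i : ℕ) :
    (kernelResolutionComplex K n).ExactAt (i + 1) := by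
  rw [HomologicalComplex.exactAt_iff' _ (i + 1 + 1) (i + 1) i (by simp) (by simp)]
  refine ShortComplex.exact_of_iso ?_ (exact_sc'_of_exactAt (hE (n + 1 + ((i + 1 : ℕ) : ℤ)))
    (i := n + 1 + ((i + 1 + 1 : ℕ) : ℤ)) (k := n + 1 + (i : ℤ))
    (by push_cast; ring) (by push_cast; ring))
  exact ShortComplex.isoMk (Iso.refl _) (Iso.refl _) (Iso.refl _)
    (by dsimp; erw [Category.id_comp, Category.comp_id]; exact kernelResolutionComplex_d K n _)
    (by dsimp; erw [Category.id_comp, Category.comp_id]; exact kernelResolutionComplex_d K n _)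

theorem kernelResolutionComplex_d_one_zero (n : ℤ) :
    (kernelResolutionComplex K n).d 1 0 = K.d (n + 1 + ((1 : ℕ) : ℤ)) (n + 1 + ((0 : ℕ) : ℤ)) :=
  kernelResolutionComplex_d K n 0

variable (K)

noncomputable def kernelResolutionπ (n : ℤ) :
    (kernelResolutionComplex K n).X 0 ⟶ kernel (K.d n (n - 1)) :=
  kernel.lift _ (K.d _ n) (K.d_comp_d _ _ _)

theorem kernelResolutionComplex_d_one_zero_comp_π (n : ℤ) :
    (kernelResolutionComplex K n).d 1 0 ≫ kernelResolutionπ K n = 0 := by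
  rw [← cancel_mono (kernel.ι _), Category.assoc, kernelResolutionπ, zero_comp,
    kernelResolutionComplex_d_one_zero]
  erw [kernel.lift_ι]
  exact K.d_comp_d _ _ _

variable {K}

theorem kernelResolutionπ_exact (hE : ∀ j, K.ExactAt j) (n : ℤ) :
    (ShortComplex.mk _ _ (kernelResolutionComplex_d_one_zero_comp_π K n)).Exact := by
  let φ : ShortComplex.mk _ _ (kernelResolutionComplex_d_one_zero_comp_π K n) ⟶
      K.sc' (n + 1 + ((1 : ℕ) : ℤ)) (n + 1 + ((0 : ℕ) : ℤ)) n :=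
    { τ₁ := 𝟙 _, τ₂ := 𝟙 _, τ₃ := kernel.ι _
      comm₁₂ := (Category.id_comp _).trans
        ((kernelResolutionComplex_d_one_zero n).symm.trans (Category.comp_id _).symm)
      comm₂₃ := (Category.id_comp _).trans (kernel.lift_ι _ _ _).symm }
  have : Epi φ.τ₁ := inferInstanceAs (Epi (𝟙 _))
  have : IsIso φ.τ₂ := inferInstanceAs (IsIso (𝟙 _))
  have : Mono φ.τ₃ := inferInstanceAs (Mono (kernel.ι (K.d n (n - 1))))
  exact (ShortComplex.exact_iff_of_epi_of_isIso_of_mono φ).2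
    (exact_sc'_of_exactAt (hE _) (by push_cast; ring) (by push_cast; ring))

theorem epi_kernelResolutionπ (hE : ∀ j, K.ExactAt j) (n : ℤ) : Epi (kernelResolutionπ K n) :=
  (exact_sc'_of_exactAt (hE n) (i := n + 1 + ((0 : ℕ) : ℤ)) (by simp) rfl).epi_kernelLift

noncomputable def kernelResolution (hP : ∀ j, Projective (K.X j)) (hE : ∀ j, K.ExactAt j)
    (n : ℤ) :
    ProjectiveResolution (kernel (K.d n (n - 1))) where
  complex := kernelResolutionComplex K n
  projective i := hP _
  π := (ChainComplex.toSingle₀Equiv _ _).symm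
    ⟨kernelResolutionπ K n, kernelResolutionComplex_d_one_zero_comp_π K n⟩
  quasiIso := ⟨fun i => by
    cases i with
    | zero =>
      rw [ChainComplex.quasiIsoAt₀_iff, ShortComplex.quasiIso_iff_of_zeros']
      · refine (ShortComplex.exact_and_epi_g_iff_of_iso ?_).2
          ⟨kernelResolutionπ_exact hE n, epi_kernelResolutionπ hE n⟩
        refine ShortComplex.isoMk (Iso.refl _) (Iso.refl _) (Iso.refl _) ?_ ?_ <;>
          dsimp <;> erw [Category.id_comp, Category.comp_id]
        · rfl
        · simp only [HomologicalComplex.shortComplexFunctor'_map_τ₂,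
            ChainComplex.toSingle₀Equiv_symm_apply_f_zero]
          rfl
      all_goals rfl
    | succ i =>
      rw [quasiIsoAt_iff_exactAt' _ _ (ChainComplex.exactAt_succ_single_obj _ _)]
      exact kernelResolutionComplex_exactAt_succ hE n i⟩

end KernelResolution

section ExtKernel

variable {𝒞 : Type*} [Category 𝒞] [Abelian 𝒞]

theorem linearYonedaObj_exactAt_succ_iff (P : ChainComplex 𝒞 ℕ) (Y : 𝒞) (i : ℕ) :
    (P.linearYonedaObj ℤ Y).ExactAt (i + 1) ↔
      ∀ g : P.X (i + 1) ⟶ Y, P.d (i + 1 + 1) (i + 1) ≫ g = 0 →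
        ∃ h : P.X i ⟶ Y, P.d (i + 1) i ≫ h = g := by
  rw [HomologicalComplex.exactAt_iff' _ i (i + 1) (i + 1 + 1) (by simp) (by simp),
    ShortComplex.moduleCat_exact_iff]
  rfl

variable [EnoughProjectives 𝒞] {K : ChainComplex 𝒞 ℤ}

theorem isZero_ext_succ_kernel_iff (hP : ∀ j, Projective (K.X j)) (hE : ∀ j, K.ExactAt j)
    (n : ℤ) (Y : 𝒞) (i : ℕ) :
    IsZero (((Ext ℤ 𝒞 (i + 1)).obj (Opposite.op (kernel (K.d n (n - 1))))).obj Y) ↔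
      HomExactAt K Y (n + 1 + ((i + 1 : ℕ) : ℤ)) := by
  rw [((kernelResolution hP hE n).isoExt (i + 1) Y).isZero_iff,
    ← HomologicalComplex.exactAt_iff_isZero_homology, linearYonedaObj_exactAt_succ_iff,
    homExactAt_iff (i := n + 1 + ((i + 1 + 1 : ℕ) : ℤ)) (k := n + 1 + (i : ℤ))
      (by push_cast; ring) (by push_cast; ring)]
  dsimp only [kernelResolution]
  simp only [kernelResolutionComplex_d]
  rfl

end ExtKernel

theorem IsTotallyAcyclicWrt.anti {𝓣 𝓣' : Set (ModuleCat.{0} R)} (h : 𝓣 ⊆ 𝓣')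
    {K : ChainComplex (ModuleCat.{0} R) ℤ} (hK : IsTotallyAcyclicWrt 𝓣' K) :
    IsTotallyAcyclicWrt 𝓣 K :=
  ⟨hK.projective, hK.exact, fun T hT => hK.homExact T (h hT)⟩

theorem extVanish_succ_iff_homExactAt {K : ChainComplex (ModuleCat.{0} R) ℤ}
    (hP : ∀ j, Projective (K.X j)) (hE : ∀ j, K.ExactAt j) {M : ModuleCat.{0} R} {n : ℤ}
    (e : M ≅ kernel (K.d n (n - 1))) (L : ModuleCat.{0} R) (i : ℕ) :
    ExtVanish (i + 1) M L ↔ HomExactAt K L (n + 1 + ((i + 1 : ℕ) : ℤ)) := by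
  rw [ExtVanish, ← ModuleCat.isZero_iff_subsingleton, ← isZero_ext_succ_kernel_iff hP hE n L i]
  exact (((Ext ℤ (ModuleCat.{0} R) (i + 1)).mapIso e.op).app L).isZero_iff.symm

theorem homExactAt_of_succ {𝓛 : Set (ModuleCat.{0} R)}
    (hfree : ∀ ι : Type, ModuleCat.of R (ι →₀ R) ∈ 𝓛)
    (hker : ∀ {A B C : ModuleCat.{0} R} (f : A ⟶ B) (g : B ⟶ C),
      SES f g → B ∈ 𝓛 → C ∈ 𝓛 → A ∈ 𝓛)
    {K : ChainComplex (ModuleCat.{0} R) ℤ} (hP : ∀ j, Projective (K.X j)) {m : ℤ}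
    (hflat : ∀ F, IsFlatMod F → HomExactAt K F m) (hsucc : ∀ L ∈ 𝓛, HomExactAt K L (m + 1))
    {L : ModuleCat.{0} R} (hL : L ∈ 𝓛) : HomExactAt K L m := by
  have hS := LinearMap.shortExact_shortComplexKer (Finsupp.linearCombination_id_surjective R L)
  have := hP m
  exact HomExactAt.of_shortExact hS (hflat _ (isFlatMod_of_projective _))
    (hsucc _ (hker _ _ ⟨_, hS⟩ (hfree L) hL))

/-- if 𝓛 is closed under kernels of epimorphisms, then
GP = (Ding projectives) ∩ ⊥∞𝓛. -/
theorem stmt3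
    (R : Type) [Ring R] (𝓛 : Set (ModuleCat.{0} R)) (𝓐 : Set (ModuleCat.{0} Rᵐᵒᵖ))
    (hdp : CompleteDualityPair 𝓛 𝓐)
    (hker : ∀ {A B C : ModuleCat.{0} R} (f : A ⟶ B) (g : B ⟶ C),
      SES f g → B ∈ 𝓛 → C ∈ 𝓛 → A ∈ 𝓛) :
    ∀ M : ModuleCat.{0} R,
      IsGProj 𝓛 M ↔
        (IsGProj {F : ModuleCat.{0} R | IsFlatMod F} M ∧
          ∀ L ∈ 𝓛, ∀ i : ℕ, 1 ≤ i → ExtVanish i M L) := by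
  intro M
  constructor
  · rintro ⟨K, hK, n, ⟨e⟩⟩
    refine ⟨⟨K, hK.anti fun F hF => hdp.mem_of_isFlatMod hF, n, ⟨e⟩⟩, fun L hL i hi => ?_⟩
    obtain ⟨i, rfl⟩ := Nat.exists_eq_add_of_le' hi
    exact (extVanish_succ_iff_homExactAt hK.projective hK.exact e L i).2 (hK.homExact L hL _)
  · rintro ⟨⟨K, hK, n, ⟨e⟩⟩, hExt⟩
    have hhigh : ∀ L ∈ 𝓛, ∀ m, n + 2 ≤ m → HomExactAt K L m := by
      intro L hL m hm
      obtain ⟨i, rfl⟩ : ∃ i : ℕ, m = n + 1 + ((i + 1 : ℕ) : ℤ) := ⟨(m - n - 2).toNat, by omega⟩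
      exact (extVanish_succ_iff_homExactAt hK.projective hK.exact e L i).1 (hExt L hL _ (by omega))
    have hlow : ∀ m ≤ n + 2, ∀ L ∈ 𝓛, HomExactAt K L m :=
      Int.leInductionDown (fun L hL => hhigh L hL _ le_rfl) fun m _ ih L hL =>
        homExactAt_of_succ hdp.finsupp_mem hker hK.projective (hK.homExact · · _)
          (by rwa [sub_add_cancel]) hL
    refine ⟨K, ⟨hK.projective, hK.exact, fun L hL m => ?_⟩, n, ⟨e⟩⟩
    rcases le_total m (n + 2) with hm | hm
    · exact hlow m hm L hL
    · exact hhigh L hL m hm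

end DualityPaper
end

section
/- A Gorenstein (L,A)-projective module of finite projective dimension is projective. -/
open CategoryTheory CategoryTheory.Limits DirectSum

namespace DualityPaper

variable {R : Type} [Ring R]

/-!
Let `C` be the totally acyclic complex with `M ≅ ker d_n`. Call `T` Hom-exact for `C` if every
map `C_j → T` vanishing on the image of `d_{j+1}` extends along `d_j`. This holds for `T ∈ 𝓛`,
hence for projectives, and a diagram chase through the projective `C_j` shows that it passes along
`0 → K → P → N → 0` from `K` and `P` to `N`, even with the extension lifted through `P`. By
induction on projective dimension every module of finite projective dimension is Hom-exact for
`C`. The lifted form, applied to `0 → K → P → M → 0` and the epimorphism `C_{n+1} ↠ ker d_n ≅ M`,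
splits `P → M`, so `M` is a retract of `P`.
-/

lemma CompleteDualityPair.projective_subset {𝓛 : Set (ModuleCat.{0} R)}
    {𝓐 : Set (ModuleCat.{0} Rᵐᵒᵖ)} (hdp : CompleteDualityPair 𝓛 𝓐) :
    {P : ModuleCat.{0} R | Projective P} ⊆ 𝓛 := by
  classical
  intro P (_ : Projective P)
  let π : ModuleCat.of R (⨁ _ : P, R) ⟶ P :=
    ModuleCat.ofHom (DirectSum.toModule R P P (LinearMap.toSpanSingleton R P))
  have : Epi π := (ModuleCat.epi_iff_surjective π).mpr fun x =>
    ⟨DirectSum.lof R P (fun _ => R) x 1, by simp [π, DirectSum.toModule_lof]⟩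
  exact hdp.summands_L _ (hdp.coprod_L P _ fun _ => hdp.self_mem) P
    (Projective.factorThru (𝟙 P) π) π (Projective.factorThru_comp _ _)

section Abelian

variable {C : Type*} [Category C] [Abelian C]

def HomExact {X Y Z : C} (u : X ⟶ Y) (v : Y ⟶ Z) (T : C) : Prop :=
  ∀ g : Y ⟶ T, u ≫ g = 0 → ∃ h : Z ⟶ T, v ≫ h = g

theorem HomExact.exists_lift_of_shortExact {W X Y Z : C} {t : W ⟶ X} {u : X ⟶ Y}
    {v : Y ⟶ Z} (htu : t ≫ u = 0) [Projective Y] {S : ShortComplex C} (hS : S.ShortExact)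
    (h₁ : HomExact t u S.X₁) (h₂ : HomExact u v S.X₂) (g : Y ⟶ S.X₃) (hg : u ≫ g = 0) :
    ∃ h : Z ⟶ S.X₂, v ≫ h ≫ S.g = g := by
  have := hS.mono_f
  have := hS.epi_g
  obtain ⟨g', hg'⟩ : ∃ g' : Y ⟶ S.X₂, g' ≫ S.g = g := ⟨Projective.factorThru g S.g, by simp⟩
  let w : X ⟶ S.X₁ := hS.exact.lift (u ≫ g') (by simp [hg', hg])
  have hw : w ≫ S.f = u ≫ g' := hS.exact.lift_f _ _
  obtain ⟨k, hk⟩ := h₁ w (by rw [← cancel_mono S.f, Category.assoc, hw, reassoc_of% htu]; simp)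
  obtain ⟨h, hh⟩ := h₂ (g' - k ≫ S.f) (by rw [Preadditive.comp_sub, reassoc_of% hk, hw, sub_self])
  exact ⟨h, by rw [reassoc_of% hh, Preadditive.sub_comp, hg', Category.assoc, S.zero, comp_zero,
    sub_zero]⟩

theorem HomExact.of_shortExact {W X Y Z : C} {t : W ⟶ X} {u : X ⟶ Y} {v : Y ⟶ Z}
    (htu : t ≫ u = 0) [Projective Y] {S : ShortComplex C} (hS : S.ShortExact)
    (h₁ : HomExact t u S.X₁) (h₂ : HomExact u v S.X₂) : HomExact u v S.X₃ := fun g hg =>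
  let ⟨h, hh⟩ := exists_lift_of_shortExact htu hS h₁ h₂ g hg
  ⟨h ≫ S.g, hh⟩

theorem _root_.HomologicalComplex.epi_kernelLift_d (K : ChainComplex C ℤ) {n : ℤ}
    (hK : K.ExactAt n) :
    Epi (kernel.lift (K.d n (n - 1)) (K.d (n + 1) n) (K.d_comp_d _ _ _)) :=
  ((K.exactAt_iff' (n + 1) n (n - 1) (by simp) (by simp)).1 hK).epi_kernelLift

end Abelian

namespace IsTotallyAcyclicWrt

variable {𝓛 : Set (ModuleCat.{0} R)} {C : ChainComplex (ModuleCat.{0} R) ℤ}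

theorem homExact_of_mem (hC : IsTotallyAcyclicWrt 𝓛 C) {T : ModuleCat.{0} R} (hT : T ∈ 𝓛)
    {i j k : ℤ} (hij : i = j + 1) (hjk : k = j - 1) : HomExact (C.d i j) (C.d j k) T := by
  subst hij hjk
  exact hC.homExact T hT j

theorem homExact_of_resDimLE (hproj : {P : ModuleCat.{0} R | Projective P} ⊆ 𝓛)
    (hC : IsTotallyAcyclicWrt 𝓛 C) {n : ℕ} {K : ModuleCat.{0} R}
    (hK : ResDimLE {P | Projective P} n K) {i j k : ℤ} (hij : i = j + 1) (hjk : k = j - 1) :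
    HomExact (C.d i j) (C.d j k) K := by
  induction n generalizing K i j k with
  | zero => exact hC.homExact_of_mem (hproj hK) hij hjk
  | succ n ih =>
    obtain ⟨K', P, f, p, hP, ⟨w, hS⟩, hK'⟩ := hK
    have : Projective (C.X j) := hC.projective j
    subst hij
    exact HomExact.of_shortExact (C.d_comp_d _ _ _) hS (ih hK' rfl (by omega))
      (hC.homExact_of_mem (hproj hP) rfl hjk)

end IsTotallyAcyclicWrt

theorem stmt5
    (R : Type) [Ring R] (𝓛 : Set (ModuleCat.{0} R)) (𝓐 : Set (ModuleCat.{0} Rᵐᵒᵖ))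
    (hdp : CompleteDualityPair 𝓛 𝓐) (M : ModuleCat.{0} R) (hM : IsGProj 𝓛 M)
    (hpd : ∃ n : ℕ, ResDimLE {P : ModuleCat.{0} R | Projective P} n M) :
    Projective M := by
  obtain ⟨C, hC, n, ⟨e⟩⟩ := hM
  obtain ⟨_ | m, hpd⟩ := hpd
  · exact hpd
  obtain ⟨K, P, f, p, hP, ⟨w, hS⟩, hK⟩ := hpd
  have : Projective P := hP
  have : Projective (C.X (n + 1)) := hC.projective _
  let π := kernel.lift (C.d n (n - 1)) (C.d (n + 1) n) (C.d_comp_d _ _ _)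
  have : Epi π := C.epi_kernelLift_d (hC.exact n)
  have hdπ : C.d (n + 1 + 1) (n + 1) ≫ π = 0 := by
    rw [← cancel_mono (kernel.ι _)]
    simp [π]
  obtain ⟨s, hs⟩ := HomExact.exists_lift_of_shortExact (C.d_comp_d _ _ _) hS
    (hC.homExact_of_resDimLE hdp.projective_subset hK rfl (by omega))
    (hC.homExact_of_mem (k := n) (hdp.projective_subset hP) rfl (by omega))
    (π ≫ e.inv) (by rw [reassoc_of% hdπ, zero_comp])
  have hsp : (e.hom ≫ kernel.ι _ ≫ s) ≫ p = 𝟙 M := by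
    rw [← cancel_epi e.inv, ← cancel_epi π]
    simpa [π] using hs
  exact (Retract.mk _ _ hsp).projective

end DualityPaper
end

section
/- A Gorenstein (L,A)-projective module of finite flat dimension is projective. -/
open CategoryTheory CategoryTheory.Limits DirectSum

namespace DualityPaper

variable {R : Type} [Ring R]

/-! Write `Z a` for the cycles of the totally acyclic complex `C`, so that
`0 → Z (a+1) → C (a+1) → Z a → 0` is exact with projective middle term. Call `N` extending if
every map `Z a → N` extends to `C a`. Modules of `𝓛`, in particular flat modules, are extending
by `Hom(-, 𝓛)`-exactness of `C`, and dimension shifting along the above sequences shows that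
extending modules are closed under cokernels of monomorphisms; so every module of finite flat
dimension is extending. If `M ≅ Z n` is extending, the identity of `Z n` extends to `C n`, which
makes `M` a retract of the projective `C n`. -/

section Abelian

variable {𝒞 : Type*} [Category 𝒞] [Abelian 𝒞]

lemma exists_lift_of_forall_extends {S T : ShortComplex 𝒞} (hS : S.ShortExact)
    (hT : T.ShortExact) [Projective S.X₂]
    (hext : ∀ κ : S.X₁ ⟶ T.X₁, ∃ ψ : S.X₂ ⟶ T.X₁, S.f ≫ ψ = κ) (φ : S.X₃ ⟶ T.X₃) :
    ∃ φ' : S.X₃ ⟶ T.X₂, φ' ≫ T.g = φ := by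
  have := hS.mono_f
  have := hS.epi_g
  have := hT.mono_f
  have := hT.epi_g
  let χ : S.X₂ ⟶ T.X₂ := Projective.factorThru (S.g ≫ φ) T.g
  have hχ : χ ≫ T.g = S.g ≫ φ := Projective.factorThru_comp _ _
  obtain ⟨ψ, hψ⟩ := hext (hT.exact.lift (S.f ≫ χ) (by simp [hχ]))
  have hθ : S.f ≫ (χ - ψ ≫ T.f) = 0 := by simp [reassoc_of% hψ]
  refine ⟨hS.exact.desc _ hθ, ?_⟩
  rw [← cancel_epi S.g, hS.exact.g_desc_assoc]
  simp [hχ]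

variable (C : ChainComplex 𝒞 ℤ)

noncomputable def cyclesShortComplex (a : ℤ) : ShortComplex 𝒞 :=
  ShortComplex.mk (C.iCycles (a + 1)) (C.toCycles (a + 1) a) (by
    rw [← cancel_mono (C.iCycles a)]
    simp)

lemma epi_toCycles_succ {a : ℤ} (ha : C.ExactAt a) : Epi (C.toCycles (a + 1) a) := by
  have h : Epi (C.toCycles ((ComplexShape.down ℤ).prev a) a) := ha.epi_toCycles
  rwa [ChainComplex.prev] at h

lemma cyclesShortComplex_shortExact {a : ℤ} (ha : C.ExactAt a) :
    (cyclesShortComplex C a).ShortExact := by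
  have : Mono (cyclesShortComplex C a).f := inferInstanceAs (Mono (C.iCycles (a + 1)))
  have : Epi (cyclesShortComplex C a).g := epi_toCycles_succ C ha
  refine ⟨ShortComplex.exact_of_f_is_kernel _ ?_⟩
  exact isKernelOfComp (C.iCycles a) (C.d (a + 1) a)
    (C.cyclesIsKernel (a + 1) a (by simp)) _ (C.toCycles_i _ _)

def ExtendsAlongCycles (N : 𝒞) : Prop :=
  ∀ (a : ℤ) (φ : C.cycles a ⟶ N), ∃ ψ : C.X a ⟶ N, C.iCycles a ≫ ψ = φ

variable {C}

lemma ExtendsAlongCycles.of_shortExact (hproj : ∀ n, Projective (C.X n))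
    (hexact : ∀ n, C.ExactAt n) {T : ShortComplex 𝒞} (hT : T.ShortExact)
    (h₁ : ExtendsAlongCycles C T.X₁) (h₂ : ExtendsAlongCycles C T.X₂) :
    ExtendsAlongCycles C T.X₃ := by
  intro a φ
  have : Projective (cyclesShortComplex C a).X₂ := hproj (a + 1)
  obtain ⟨φ', hφ'⟩ := exists_lift_of_forall_extends
    (cyclesShortComplex_shortExact C (hexact a)) hT (h₁ (a + 1)) φ
  obtain ⟨ψ, hψ⟩ := h₂ a φ'
  exact ⟨ψ ≫ T.g, by rw [reassoc_of% hψ]; exact hφ'⟩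

lemma projective_of_extendsAlongCycles (hproj : ∀ n, Projective (C.X n)) {M : 𝒞} {n : ℤ}
    [HasKernel (C.d n (n - 1))] (e : M ≅ kernel (C.d n (n - 1)))
    (hM : ExtendsAlongCycles C M) : Projective M := by
  let e' : M ≅ C.cycles n := e ≪≫
    IsLimit.conePointUniqueUpToIso (kernelIsKernel _) (C.cyclesIsKernel n (n - 1) (by simp))
  obtain ⟨ψ, hψ⟩ := hM n e'.inv
  have := hproj n
  exact Retract.projective ⟨e'.hom ≫ C.iCycles n, ψ, by simp [hψ]⟩

end Abelian

def charMap {A B : ModuleCat.{0} R} (p : A ⟶ B) : charL B ⟶ charL A :=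
  ModuleCat.ofHom
    { toFun := fun f => AddMonoidHom.comp (show B →+ AddCircle (1 : ℚ) from f)
        p.hom.toAddMonoidHom
      map_add' := fun _ _ => rfl
      map_smul' := fun r f => AddMonoidHom.ext fun a =>
        congrArg (show B →+ AddCircle (1 : ℚ) from f) (p.hom.map_smul r.unop a).symm }

lemma mono_charMap {A B : ModuleCat.{0} R} {p : A ⟶ B} (hp : Function.Surjective p) :
    Mono (charMap p) :=
  (ModuleCat.mono_iff_injective _).mpr fun _ _ hfg => (AddMonoidHom.cancel_right hp).mp hfg

lemma CompleteDualityPair.mem_of_isFlatMod_s6 {𝓛 : Set (ModuleCat.{0} R)}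
    {𝓐 : Set (ModuleCat.{0} Rᵐᵒᵖ)} (hdp : CompleteDualityPair 𝓛 𝓐) {F : ModuleCat.{0} R}
    (hF : IsFlatMod F) : F ∈ 𝓛 := by
  classical
  let P := ModuleCat.of R (⨁ _ : F, ModuleCat.of R R)
  have hP : P ∈ 𝓛 := hdp.coprod_L F _ fun _ => hdp.self_mem
  let p : P ⟶ F := ModuleCat.ofHom <|
    Finsupp.linearCombination R id ∘ₗ (finsuppLEquivDirectSum R R F).symm.toLinearMap
  have hp : Function.Surjective p :=
    (Finsupp.linearCombination_id_surjective R F).comp (LinearEquiv.surjective _)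
  have := mono_charMap hp
  have : Injective (charL F) := hF
  exact (hdp.char_mem_iff F).mpr (hdp.summands_A _ ((hdp.char_mem_iff P).mp hP) _ (charMap p)
    (Injective.factorThru (𝟙 _) (charMap p)) (Injective.comp_factorThru _ _))

lemma IsTotallyAcyclicWrt.extendsAlongCycles_of_mem {𝓣 : Set (ModuleCat.{0} R)}
    {C : ChainComplex (ModuleCat.{0} R) ℤ} (hC : IsTotallyAcyclicWrt 𝓣 C)
    {T : ModuleCat.{0} R} (hT : T ∈ 𝓣) : ExtendsAlongCycles C T := by
  intro a φ
  have := epi_toCycles_succ C (hC.exact a)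
  obtain ⟨ψ, hψ⟩ : ∃ ψ : C.X a ⟶ T, C.d (a + 1) a ≫ ψ = C.toCycles (a + 1) a ≫ φ := by
    have := hC.homExact T hT (a + 1) (C.toCycles (a + 1) a ≫ φ) (by simp)
    rwa [add_sub_cancel_right] at this
  refine ⟨ψ, ?_⟩
  rw [← cancel_epi (C.toCycles (a + 1) a), ← hψ, C.toCycles_i_assoc]

lemma IsTotallyAcyclicWrt.extendsAlongCycles_of_resDimLE {𝓣 𝓒 : Set (ModuleCat.{0} R)}
    {C : ChainComplex (ModuleCat.{0} R) ℤ} (hC : IsTotallyAcyclicWrt 𝓣 C) (h𝓒 : 𝓒 ⊆ 𝓣)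
    {n : ℕ} {N : ModuleCat.{0} R} (hN : ResDimLE 𝓒 n N) : ExtendsAlongCycles C N := by
  induction n generalizing N with
  | zero => exact hC.extendsAlongCycles_of_mem (h𝓒 hN)
  | succ n ih =>
    obtain ⟨K, F, _, _, hF, ⟨_, hKFN⟩, hK⟩ := hN
    exact .of_shortExact hC.projective hC.exact hKFN (ih hK)
      (hC.extendsAlongCycles_of_mem (h𝓒 hF))

theorem stmt6
    (R : Type) [Ring R] (𝓛 : Set (ModuleCat.{0} R)) (𝓐 : Set (ModuleCat.{0} Rᵐᵒᵖ))
    (hdp : CompleteDualityPair 𝓛 𝓐) (M : ModuleCat.{0} R) (hM : IsGProj 𝓛 M)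
    (hfd : ∃ n : ℕ, ResDimLE {F : ModuleCat.{0} R | IsFlatMod F} n M) :
    Projective M := by
  obtain ⟨C, hC, n, ⟨e⟩⟩ := hM
  obtain ⟨m, hm⟩ := hfd
  exact projective_of_extendsAlongCycles hC.projective e
    (hC.extendsAlongCycles_of_resDimLE (fun _ => hdp.mem_of_isFlatMod_s6) hm)

end DualityPaper
end

section
/- A Gorenstein (L,A)-projective module belonging to 𝓛 is projective. -/
open CategoryTheory CategoryTheory.Limits DirectSum

namespace DualityPaper

variable {R : Type} [Ring R]

/-!
If `M ≅ ker (P_n → P_{n-1})` in a `Hom(-, 𝓣)`-exact complex of projectives and `M ∈ 𝓣`, then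
`Hom(-, M)`-exactness extends `𝟙 M` along the inclusion `M ↪ P_n`, so `M` is a direct summand of
the projective `P_n`.
-/

theorem _root_.ChainComplex.epi_kernelLift_d_of_exactAt {V : Type*} [Category V] [Abelian V]
    {C : ChainComplex V ℤ} {n : ℤ} (h : C.ExactAt n) :
    Epi (kernel.lift (C.d n (n - 1)) (C.d (n + 1) n) (C.d_comp_d _ _ _)) :=
  (ShortComplex.exact_iff_epi_kernel_lift _).mp <|
    (HomologicalComplex.exactAt_iff' C (n + 1) n (n - 1) (by simp) (by simp)).mp h

namespace IsTotallyAcyclicWrt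

variable {𝓣 : Set (ModuleCat.{0} R)} {C : ChainComplex (ModuleCat.{0} R) ℤ}

theorem exists_kernelι_comp_eq (hC : IsTotallyAcyclicWrt 𝓣 C) (n : ℤ) {T : ModuleCat.{0} R}
    (hT : T ∈ 𝓣) (g : kernel (C.d n (n - 1)) ⟶ T) :
    ∃ r : C.X n ⟶ T, kernel.ι (C.d n (n - 1)) ≫ r = g := by
  set π := kernel.lift (C.d n (n - 1)) (C.d (n + 1) n) (C.d_comp_d _ _ _)
  have hπ : Epi π := ChainComplex.epi_kernelLift_d_of_exactAt (hC.exact n)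
  have hdπ : C.d (n + 1 + 1) (n + 1) ≫ π = 0 := by
    rw [← cancel_mono (kernel.ι _), Category.assoc, kernel.lift_ι, C.d_comp_d, zero_comp]
  obtain ⟨r, hr⟩ : ∃ r : C.X n ⟶ T, C.d (n + 1) n ≫ r = π ≫ g := by
    obtain ⟨h, hh⟩ := hC.homExact T hT (n + 1) (π ≫ g) (by rw [← Category.assoc, hdπ, zero_comp])
    -- `homExact` lands in `C.X (n + 1 - 1)`, which is not definitionally `C.X n`.
    generalize hm : n + 1 - 1 = m at h hh
    obtain rfl : m = n := by omega
    exact ⟨h, hh⟩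
  exact ⟨r, by rw [← cancel_epi π, ← Category.assoc, kernel.lift_ι, hr]⟩

end IsTotallyAcyclicWrt

theorem IsGProj.projective_of_mem {𝓣 : Set (ModuleCat.{0} R)} {M : ModuleCat.{0} R}
    (hM : IsGProj 𝓣 M) (hT : M ∈ 𝓣) : Projective M := by
  obtain ⟨C, hC, n, ⟨e⟩⟩ := hM
  obtain ⟨r, hr⟩ := hC.exists_kernelι_comp_eq n hT e.inv
  have := hC.projective n
  exact Retract.projective ⟨e.hom ≫ kernel.ι _, r, by simp [hr]⟩

theorem stmt7_general
    (R : Type) [Ring R] (𝓛 : Set (ModuleCat.{0} R))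
    (M : ModuleCat.{0} R) (hM : IsGProj 𝓛 M) (hL : M ∈ 𝓛) :
    Projective M :=
  hM.projective_of_mem hL

theorem stmt7
    (R : Type) [Ring R] (𝓛 : Set (ModuleCat.{0} R)) (𝓐 : Set (ModuleCat.{0} Rᵐᵒᵖ))
    (hdp : CompleteDualityPair 𝓛 𝓐) (M : ModuleCat.{0} R) (hM : IsGProj 𝓛 M) (hL : M ∈ 𝓛) :
    Projective M :=
  stmt7_general R 𝓛 M hM hL

end DualityPaper
end

section
/- An R-module M is strongly Gorenstein (L,A)-projective if and only if there exists a short exact sequence 0 → M → P → M → 0 with P projective and Ext¹_R(M, L) = 0 for all L ∈ 𝓛; moreover this is equivalent to the same condition with Extⁱ_R(M, L) = 0 for all i ≥ 1. -/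
open CategoryTheory CategoryTheory.Limits DirectSum

/-!
A short exact sequence `0 → M →i P →g M → 0` with `P` projective splices with itself into the
periodic projective resolution `⋯ → P → P → P → M → 0` whose differentials are all `g ≫ i`.
Conversely, if `f : P ⟶ P` is exact at the middle of `P →f P →f P`, then
`0 → ker f → P → ker f → 0` is short exact and `g ≫ i = f`, so a strongly Gorenstein projective
module is exactly a module with such a sequence whose endomorphism `g ≫ i` is `Hom(-, L)`-exact.
Computing `Extⁿ⁺¹(M, L)` with the periodic resolution gives the cohomology of
`Hom(P, L) → Hom(P, L) → Hom(P, L)` (both maps precomposition with `g ≫ i`) for every `n`,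
and its vanishing is that `Hom(-, L)`-exactness.
-/

universe v u

namespace CategoryTheory.ShortComplex

variable {C : Type u} [Category.{v} C] [Abelian C]

lemma exact_epi_comp_iff {X₀ X₁ X₂ X₃ : C} (e : X₀ ⟶ X₁) [Epi e] {f : X₁ ⟶ X₂}
    {g : X₂ ⟶ X₃} (w : f ≫ g = 0) :
    (ShortComplex.mk (e ≫ f) g (by rw [Category.assoc, w, comp_zero])).Exact ↔
      (ShortComplex.mk f g w).Exact :=
  exact_iff_of_epi_of_isIso_of_mono
    (show ShortComplex.mk (e ≫ f) g _ ⟶ ShortComplex.mk f g w from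
      { τ₁ := e, τ₂ := 𝟙 _, τ₃ := 𝟙 _ })

lemma exact_comp_mono_iff {X₁ X₂ X₃ X₄ : C} {f : X₁ ⟶ X₂} {g : X₂ ⟶ X₃} (m : X₃ ⟶ X₄)
    [Mono m] (w : f ≫ g = 0) :
    (ShortComplex.mk f (g ≫ m) (by rw [← Category.assoc, w, zero_comp])).Exact ↔
      (ShortComplex.mk f g w).Exact :=
  (exact_iff_of_epi_of_isIso_of_mono
    (show ShortComplex.mk f g w ⟶ ShortComplex.mk f (g ≫ m) _ from
      { τ₁ := 𝟙 _, τ₂ := 𝟙 _, τ₃ := m })).symm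

lemma Exact.shortExact_kernel {S : ShortComplex C} (hS : S.Exact) :
    (ShortComplex.mk (kernel.ι S.f) (kernel.lift S.g S.f S.zero) (by
      rw [← cancel_mono (kernel.ι S.g), Category.assoc, kernel.lift_ι, kernel.condition,
        zero_comp])).ShortExact := by
  have : Epi (kernel.lift S.g S.f S.zero) := hS.epi_kernelLift
  refine { exact := (exact_comp_mono_iff (kernel.ι S.g) _).1 ?_ }
  simpa only [kernel.lift_ι] using
    exact_of_f_is_kernel (ShortComplex.mk (kernel.ι S.f) S.f _) (kernelIsKernel S.f)

variable {M P : C} {i : M ⟶ P} {g : P ⟶ M} {w : i ≫ g = 0}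

lemma ShortExact.exact_comp_g (hS : (ShortComplex.mk i g w).ShortExact) :
    (ShortComplex.mk (g ≫ i) g (by rw [Category.assoc, w, comp_zero])).Exact :=
  have : Epi g := hS.epi_g
  (exact_epi_comp_iff g w).2 hS.exact

lemma ShortExact.exact_comp_comp (hS : (ShortComplex.mk i g w).ShortExact) :
    (ShortComplex.mk (g ≫ i) (g ≫ i) (by simp [reassoc_of% w])).Exact :=
  have : Mono i := hS.mono_f
  (exact_comp_mono_iff i _).2 hS.exact_comp_g

end CategoryTheory.ShortComplex

namespace ChainComplex

variable {C : Type u} [Category.{v} C] [Abelian C]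

abbrev periodic {P : C} (F : P ⟶ P) (hF : F ≫ F = 0) : ChainComplex C ℕ where
  X _ := P
  d i j := if j + 1 = i then F else 0
  shape _ _ h := if_neg h
  d_comp_d' _ _ _ hij hjk := by obtain rfl := hij; obtain rfl := hjk; simp [hF]

@[simp]
lemma periodic_d_succ {P : C} (F : P ⟶ P) (hF : F ≫ F = 0) (n : ℕ) :
    (periodic F hF).d (n + 1) n = F :=
  if_pos rfl

lemma linearYonedaObj_exactAt_succ_iff (X : ChainComplex C ℕ) (A : Type*) [Ring A]
    [Linear A C] (L : C) (n : ℕ) :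
    (X.linearYonedaObj A L).ExactAt (n + 1) ↔ ∀ u : X.X (n + 1) ⟶ L,
      X.d (n + 2) (n + 1) ≫ u = 0 → ∃ v : X.X n ⟶ L, X.d (n + 1) n ≫ v = u := by
  rw [HomologicalComplex.exactAt_iff' _ n (n + 1) (n + 2) (by simp) (by simp),
    ShortComplex.moduleCat_exact_iff]
  rfl

end ChainComplex

namespace CategoryTheory.ProjectiveResolution

variable {C : Type u} [Category.{v} C] [Abelian C]

open ShortComplex in
noncomputable def ofShortExactSelf {M P : C} [Projective P] {i : M ⟶ P} {g : P ⟶ M}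
    {w : i ≫ g = 0} (hS : (ShortComplex.mk i g w).ShortExact) : ProjectiveResolution M :=
  have hF : (g ≫ i) ≫ g ≫ i = 0 := by simp [reassoc_of% w]
  { complex := ChainComplex.periodic (g ≫ i) hF
    projective _ := inferInstanceAs (Projective P)
    π := (ChainComplex.toSingle₀Equiv _ M).symm ⟨g, by simp [w]⟩
    -- The objects of `sc'` are only defeq to `P` and `M`, so `simp` cannot cancel identities.
    quasiIso := ⟨fun n => by
      cases n with
      | zero =>
        rw [ChainComplex.quasiIsoAt₀_iff, ShortComplex.quasiIso_iff_of_zeros' _ rfl rfl rfl]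
        refine (exact_and_epi_g_iff_of_iso ?_).2 ⟨hS.exact_comp_g, hS.epi_g⟩
        refine ShortComplex.isoMk (Iso.refl P) (Iso.refl P) (Iso.refl M) ?_ ?_
        · simp; exact (Category.id_comp _).trans (Category.comp_id _).symm
        · exact (Category.id_comp g).trans ((Category.comp_id _).trans
            (ChainComplex.toSingle₀Equiv_symm_apply_f_zero
              (C := ChainComplex.periodic _ hF) g _)).symm
      | succ n =>
        rw [quasiIsoAt_iff_exactAt' _ _ (ChainComplex.exactAt_succ_single_obj M n),
          HomologicalComplex.exactAt_iff' _ (n + 2) (n + 1) n (by simp) (by simp)]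
        refine exact_of_iso (ShortComplex.isoMk (Iso.refl P) (Iso.refl P) (Iso.refl P) ?_ ?_)
          hS.exact_comp_comp <;>
        · simp; exact (Category.id_comp _).trans (Category.comp_id _).symm⟩ }

lemma subsingleton_ext_iff_exactAt {M : C} (Q : ProjectiveResolution M) (A : Type*) [Ring A]
    [Linear A C] [EnoughProjectives C] (n : ℕ) (L : C) :
    Subsingleton (((Ext A C n).obj (Opposite.op M)).obj L) ↔
      (Q.complex.linearYonedaObj A L).ExactAt n := by
  rw [HomologicalComplex.exactAt_iff_isZero_homology, ← ModuleCat.isZero_iff_subsingleton]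
  exact ⟨fun h => h.of_iso (Q.isoExt n L).symm, fun h => h.of_iso (Q.isoExt n L)⟩

end CategoryTheory.ProjectiveResolution

namespace DualityPaper

variable {R : Type} [Ring R]

lemma extVanish_succ_iff {M P : ModuleCat.{0} R} [Projective P] {i : M ⟶ P} {g : P ⟶ M}
    {w : i ≫ g = 0} (hS : (ShortComplex.mk i g w).ShortExact) (n : ℕ) (L : ModuleCat.{0} R) :
    ExtVanish (n + 1) M L ↔
      ∀ u : P ⟶ L, (g ≫ i) ≫ u = 0 → ∃ v : P ⟶ L, (g ≫ i) ≫ v = u := by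
  rw [ExtVanish, (ProjectiveResolution.ofShortExactSelf hS).subsingleton_ext_iff_exactAt,
    ChainComplex.linearYonedaObj_exactAt_succ_iff]
  simp only [ProjectiveResolution.ofShortExactSelf, ChainComplex.periodic_d_succ]
  exact Iff.rfl

lemma isSGProj_iff {𝓣 : Set (ModuleCat.{0} R)} {M : ModuleCat.{0} R} :
    IsSGProj 𝓣 M ↔ ∃ (P : ModuleCat.{0} R) (i : M ⟶ P) (g : P ⟶ M), Projective P ∧ SES i g ∧
      ∀ T ∈ 𝓣, ∀ u : P ⟶ T, (g ≫ i) ≫ u = 0 → ∃ v : P ⟶ T, (g ≫ i) ≫ v = u := by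
  constructor
  · rintro ⟨P, f, hP, ⟨w, hf⟩, hlift, ⟨e⟩⟩
    have hw : kernel.ι f ≫ kernel.lift f f w = 0 := by
      rw [← cancel_mono (kernel.ι f)]; simp
    refine ⟨P, e.hom ≫ kernel.ι f, kernel.lift f f w ≫ e.inv, hP,
      ⟨by simp [reassoc_of% hw], ?_⟩, by simpa using hlift⟩
    exact ShortComplex.shortExact_of_iso
      (ShortComplex.isoMk e.symm (Iso.refl P) e.symm (by simp) (by simp)) hf.shortExact_kernel
  · rintro ⟨P, i, g, hP, ⟨w, hS⟩, hlift⟩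
    have : Mono i := hS.mono_f
    exact ⟨P, g ≫ i, hP, ⟨_, hS.exact_comp_comp⟩, hlift,
      ⟨hS.exact.fIsKernel.conePointUniqueUpToIso (kernelIsKernel g) ≪≫
        (kernelCompMono g i).symm⟩⟩

theorem stmt15_general
    (R : Type) [Ring R] (𝓛 : Set (ModuleCat.{0} R))
    (M : ModuleCat.{0} R) :
    (IsSGProj 𝓛 M ↔
      ∃ (P : ModuleCat.{0} R) (f : M ⟶ P) (g : P ⟶ M),
        Projective P ∧ SES f g ∧ ∀ L ∈ 𝓛, ExtVanish 1 M L) ∧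
    (IsSGProj 𝓛 M ↔
      ∃ (P : ModuleCat.{0} R) (f : M ⟶ P) (g : P ⟶ M),
        Projective P ∧ SES f g ∧ ∀ L ∈ 𝓛, ∀ i : ℕ, 1 ≤ i → ExtVanish i M L) := by
  have extVanish_iff : ∀ {P : ModuleCat.{0} R} {i : M ⟶ P} {g : P ⟶ M}, Projective P →
      SES i g → ∀ L n, ExtVanish (n + 1) M L ↔
        ∀ u : P ⟶ L, (g ≫ i) ≫ u = 0 → ∃ v : P ⟶ L, (g ≫ i) ≫ v = u :=
    fun _ ⟨_, hS⟩ L n => extVanish_succ_iff hS n L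
  refine ⟨isSGProj_iff.trans ?_, isSGProj_iff.trans ?_⟩ <;>
    refine exists₃_congr fun P i g => and_congr_right fun hP => and_congr_right fun hS => ?_
  · exact forall₂_congr fun L _ => (extVanish_iff hP hS L 0).symm
  · refine forall₂_congr fun L _ => ⟨fun h k hk => ?_, fun h => ?_⟩
    · obtain ⟨n, rfl⟩ := Nat.exists_eq_add_of_le' hk
      exact (extVanish_iff hP hS L n).2 h
    · exact (extVanish_iff hP hS L 0).1 (h 1 le_rfl)

theorem stmt15
    (R : Type) [Ring R] (𝓛 : Set (ModuleCat.{0} R)) (𝓐 : Set (ModuleCat.{0} Rᵐᵒᵖ))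
    (hdp : CompleteDualityPair 𝓛 𝓐) (M : ModuleCat.{0} R) :
    (IsSGProj 𝓛 M ↔
      ∃ (P : ModuleCat.{0} R) (f : M ⟶ P) (g : P ⟶ M),
        Projective P ∧ SES f g ∧ ∀ L ∈ 𝓛, ExtVanish 1 M L) ∧
    (IsSGProj 𝓛 M ↔
      ∃ (P : ModuleCat.{0} R) (f : M ⟶ P) (g : P ⟶ M),
        Projective P ∧ SES f g ∧ ∀ L ∈ 𝓛, ∀ i : ℕ, 1 ≤ i → ExtVanish i M L) :=
  stmt15_general R 𝓛 M

end DualityPaper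
end
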